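/- arXiv:2302.06726 — 3 statements merged into one kernel-verified Lean document; each statement's English description precedes it below -/
import Mathlib

section
/- If a predictor p̃ satisfies (L, C, α)-swap loss OI, then it is an (L, C, α)-swap omnipredictor. -/
open Finset

noncomputable section

open Classical in
/-- Real-valued indicator of a proposition. -/
noncomputable def ind (P : Prop) : ℝ := if P then 1 else 0

/-- The real value of a Boolean label. -/
def yval : Bool → ℝ := fun y => if y then 1 else 0

variable {X : Type*}

/-- Expectation under a joint distribution `μ` on `X × {0,1}` of `f(x,y)`. -/
def Exp [Fintype X] (μ : X → Bool → ℝ) (f : X → Bool → ℝ) : ℝ :=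
  ∑ x, ∑ y, μ x y * f x y

/-- `μ` is a probability distribution on `X × {0,1}`. -/
def IsProb [Fintype X] (μ : X → Bool → ℝ) : Prop :=
  (∀ x y, 0 ≤ μ x y) ∧ (∑ x, ∑ y, μ x y) = 1

/-- Probability of the level set `h(x) = v`. -/
def pmass [Fintype X] (μ : X → Bool → ℝ) (h : X → ℝ) (v : ℝ) : ℝ :=
  ∑ x, ∑ y, ind (h x = v) * μ x y

/-- Conditional expectation of `f(x,y)` given `h(x) = v` (the distribution `D|_v`). -/
def CExp [Fintype X] (μ : X → Bool → ℝ) (h : X → ℝ) (v : ℝ) (f : X → Bool → ℝ) : ℝ :=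
  (∑ x, ∑ y, ind (h x = v) * (μ x y * f x y)) / pmass μ h v

/-- Expectation of `g(v)` over `v ~ D_h`, the distribution of `h(x)`. -/
def VExp [Fintype X] (μ : X → Bool → ℝ) (h : X → ℝ) (g : ℝ → ℝ) : ℝ :=
  Exp μ (fun x _ => g (h x))

/-- Linear extension of a loss to probabilities in the first argument:
`ℓ(p,t) = p·ℓ(1,t) + (1−p)·ℓ(0,t)`. -/
def lext (ℓ : Bool → ℝ → ℝ) (p t : ℝ) : ℝ := p * ℓ true t + (1 - p) * ℓ false t

/-- Partial difference of a loss: `∂ℓ(t) = ℓ(1,t) − ℓ(0,t)`. -/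
def pd (ℓ : Bool → ℝ → ℝ) (t : ℝ) : ℝ := ℓ true t - ℓ false t

/-- Projection onto the closed interval `[a,b]`. -/
def proj (a b t : ℝ) : ℝ := max a (min b t)


lemma pmass_nonneg [Fintype X] (μ : X → Bool → ℝ) (hμ : ∀ x y, 0 ≤ μ x y)
    (h : X → ℝ) (v : ℝ) : 0 ≤ pmass μ h v := by
  apply Finset.sum_nonneg; intro x _; apply Finset.sum_nonneg; intro y _
  unfold ind; split_ifs <;> simp [hμ x y]

lemma CExp_sub [Fintype X] (μ : X → Bool → ℝ) (h : X → ℝ) (v : ℝ) (f g : X → Bool → ℝ) :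
    CExp μ h v (fun x y => f x y - g x y) = CExp μ h v f - CExp μ h v g := by
  unfold CExp
  rw [← sub_div]
  congr 1
  rw [← Finset.sum_sub_distrib]
  refine Finset.sum_congr rfl fun x _ => ?_
  rw [← Finset.sum_sub_distrib]
  exact Finset.sum_congr rfl fun y _ => by ring

lemma CExp_nonpos [Fintype X] (μ : X → Bool → ℝ) (hμ : ∀ x y, 0 ≤ μ x y)
    (h : X → ℝ) (v : ℝ) (f : X → Bool → ℝ)
    (hf : ∀ x, h x = v → ∀ y, f x y ≤ 0) : CExp μ h v f ≤ 0 := by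
  unfold CExp
  apply div_nonpos_of_nonpos_of_nonneg
  · apply Finset.sum_nonpos; intro x _; apply Finset.sum_nonpos; intro y _
    unfold ind; split_ifs with hx
    · rw [one_mul]; exact mul_nonpos_of_nonneg_of_nonpos (hμ x y) (hf x hx y)
    · simp
  · exact pmass_nonneg μ hμ h v

lemma VExp_sub [Fintype X] (μ : X → Bool → ℝ) (h : X → ℝ) (g₁ g₂ : ℝ → ℝ) :
    VExp μ h (fun v => g₁ v - g₂ v) = VExp μ h g₁ - VExp μ h g₂ := by
  unfold VExp Exp
  rw [← Finset.sum_sub_distrib]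
  refine Finset.sum_congr rfl fun x _ => ?_
  rw [← Finset.sum_sub_distrib]
  exact Finset.sum_congr rfl fun y _ => by ring

lemma VExp_mono [Fintype X] (μ : X → Bool → ℝ) (hμ : ∀ x y, 0 ≤ μ x y)
    (h : X → ℝ) (g₁ g₂ : ℝ → ℝ) (hg : ∀ x, g₁ (h x) ≤ g₂ (h x)) :
    VExp μ h g₁ ≤ VExp μ h g₂ := by
  unfold VExp Exp
  refine Finset.sum_le_sum fun x _ => Finset.sum_le_sum fun y _ => ?_
  exact mul_le_mul_of_nonneg_left (hg x) (hμ x y)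

/-- swap loss OI implies swap omniprediction.  Here `ỹ | x ~ Ber(pt x)`,
so the expectation of any `g(x,ỹ)` is `E_x[pt(x)·g(x,1) + (1−pt(x))·g(x,0)]`. -/
theorem swapLossOI_implies_swapOmni [Fintype X]
    (μ : X → Bool → ℝ) (hμ : IsProb μ)
    (pt : X → ℝ) (hrange : ∀ x, pt x ∈ Set.Icc (0:ℝ) 1)
    (hpos : ∀ x : X, 0 < pmass μ pt (pt x))
    (C : Finset (X → ℝ)) (hC : C.Nonempty)
    (L : Finset (Bool → ℝ → ℝ)) (hL : L.Nonempty)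
    (k : (Bool → ℝ → ℝ) → ℝ → ℝ)
    (hk : ∀ ℓ ∈ L, ∀ p ∈ Set.Icc (0:ℝ) 1, ∀ t : ℝ, lext ℓ p (k ℓ p) ≤ lext ℓ p t)
    (α : ℝ)
    (hswap : ∀ (ℓa : ℝ → Bool → ℝ → ℝ) (ca : ℝ → X → ℝ),
      (∀ x : X, ℓa (pt x) ∈ L) → (∀ x : X, ca (pt x) ∈ C) →
      VExp μ pt (fun v => |CExp μ pt v (fun x y =>
        (ℓa v y (k (ℓa v) v) - ℓa v y (ca v x)) -
          (pt x * (ℓa v true (k (ℓa v) v) - ℓa v true (ca v x)) +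
            (1 - pt x) * (ℓa v false (k (ℓa v) v) - ℓa v false (ca v x))))|) ≤ α) :
    ∀ ℓa : ℝ → Bool → ℝ → ℝ, (∀ x : X, ℓa (pt x) ∈ L) →
      VExp μ pt (fun v => CExp μ pt v (fun _ y => ℓa v y (k (ℓa v) v))) ≤
        VExp μ pt (fun v => C.inf' hC (fun c =>
          CExp μ pt v (fun x y => ℓa v y (c x)))) + α := by
  intro ℓa hℓ
  -- choose for each v a minimizer ca v in C
  have hex : ∀ v : ℝ, ∃ c ∈ C,
      C.inf' hC (fun c => CExp μ pt v (fun x y => ℓa v y (c x))) =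
        CExp μ pt v (fun x y => ℓa v y (c x)) :=
    fun v => C.exists_mem_eq_inf' hC _
  classical
  set ca : ℝ → X → ℝ := fun v => (hex v).choose with hca
  have hca_mem : ∀ v, ca v ∈ C := fun v => (hex v).choose_spec.1
  have hca_eq : ∀ v, C.inf' hC (fun c => CExp μ pt v (fun x y => ℓa v y (c x))) =
      CExp μ pt v (fun x y => ℓa v y (ca v x)) := fun v => (hex v).choose_spec.2
  have hswap' := hswap ℓa ca hℓ (fun x => hca_mem (pt x))
  simp only [hca_eq]
  -- pointwise key estimate at v = pt x₀
  have key : ∀ x₀ : X,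
      CExp μ pt (pt x₀) (fun _ y => ℓa (pt x₀) y (k (ℓa (pt x₀)) (pt x₀))) -
        CExp μ pt (pt x₀) (fun x y => ℓa (pt x₀) y (ca (pt x₀) x)) ≤
      |CExp μ pt (pt x₀) (fun x y =>
        (ℓa (pt x₀) y (k (ℓa (pt x₀)) (pt x₀)) - ℓa (pt x₀) y (ca (pt x₀) x)) -
          (pt x * (ℓa (pt x₀) true (k (ℓa (pt x₀)) (pt x₀)) - ℓa (pt x₀) true (ca (pt x₀) x)) +
            (1 - pt x) * (ℓa (pt x₀) false (k (ℓa (pt x₀)) (pt x₀)) -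
              ℓa (pt x₀) false (ca (pt x₀) x))))| := by
    intro x₀
    set v := pt x₀ with hv
    rw [← CExp_sub]
    have hsplit := CExp_sub μ pt v
      (fun x y => ℓa v y (k (ℓa v) v) - ℓa v y (ca v x))
      (fun x y => pt x * (ℓa v true (k (ℓa v) v) - ℓa v true (ca v x)) +
        (1 - pt x) * (ℓa v false (k (ℓa v) v) - ℓa v false (ca v x)))
    have htilde : CExp μ pt v (fun x _ =>
        pt x * (ℓa v true (k (ℓa v) v) - ℓa v true (ca v x)) +
          (1 - pt x) * (ℓa v false (k (ℓa v) v) - ℓa v false (ca v x))) ≤ 0 := by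
      apply CExp_nonpos μ hμ.1
      intro x hx y
      have hle := hk (ℓa v) (hv ▸ hℓ x₀) v (hv ▸ hrange x₀) (ca v x)
      have : pt x * (ℓa v true (k (ℓa v) v) - ℓa v true (ca v x)) +
          (1 - pt x) * (ℓa v false (k (ℓa v) v) - ℓa v false (ca v x)) =
          lext (ℓa v) (pt x) (k (ℓa v) v) - lext (ℓa v) (pt x) (ca v x) := by
        unfold lext; ring
      rw [this, hx]
      linarith
    have h1 : CExp μ pt v (fun x y => ℓa v y (k (ℓa v) v) - ℓa v y (ca v x)) =
        CExp μ pt v (fun x y =>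
          (ℓa v y (k (ℓa v) v) - ℓa v y (ca v x)) -
            (pt x * (ℓa v true (k (ℓa v) v) - ℓa v true (ca v x)) +
              (1 - pt x) * (ℓa v false (k (ℓa v) v) - ℓa v false (ca v x)))) +
        CExp μ pt v (fun x _ =>
          pt x * (ℓa v true (k (ℓa v) v) - ℓa v true (ca v x)) +
            (1 - pt x) * (ℓa v false (k (ℓa v) v) - ℓa v false (ca v x))) := by
      rw [hsplit]; ring
    rw [h1]
    have := le_abs_self (CExp μ pt v (fun x y =>
      (ℓa v y (k (ℓa v) v) - ℓa v y (ca v x)) -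
        (pt x * (ℓa v true (k (ℓa v) v) - ℓa v true (ca v x)) +
          (1 - pt x) * (ℓa v false (k (ℓa v) v) - ℓa v false (ca v x)))))
    linarith
  have hmain : VExp μ pt (fun v =>
      CExp μ pt v (fun _ y => ℓa v y (k (ℓa v) v)) -
        CExp μ pt v (fun x y => ℓa v y (ca v x))) ≤ α := by
    refine le_trans (VExp_mono μ hμ.1 pt _ _ key) hswap'
  have heq := VExp_sub μ pt
    (fun v => CExp μ pt v (fun _ y => ℓa v y (k (ℓa v) v)))
    (fun v => CExp μ pt v (fun x y => ℓa v y (ca v x)))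
  linarith [heq ▸ hmain]
end
end

section
/- (Corollary 4.4.) For every assignment {ℓ_v ∈ L, c_v ∈ C}_{v ∈ Im(p̃)}: E_{v~D_p̃}[ |E_{D|_v}[ℓ_v(y*, c_v(x)) − ℓ_v(ỹ, c_v(x))]| ] = E_{v~D_p̃}[ |E_{D|_v}[(y* − ỹ)·∂ℓ_v(c_v(x))]| ]. Consequently, if p̃ is (∂L ∘ C, α)-swap multicalibrated, then E_{v~D_p̃}[ |E_{D|_v}[ℓ_v(y*, c_v(x)) − ℓ_v(ỹ, c_v(x))]| ] ≤ α. -/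
open Finset

noncomputable section

variable {X : Type*}

lemma CExp_congr' [Fintype X] (μ : X → Bool → ℝ) (h : X → ℝ) (v : ℝ)
    (f g : X → Bool → ℝ) (hfg : ∀ x y, h x = v → f x y = g x y) :
    CExp μ h v f = CExp μ h v g := by
  unfold CExp
  congr 1
  refine Finset.sum_congr rfl fun x _ => Finset.sum_congr rfl fun y _ => ?_
  by_cases hv : h x = v
  · rw [hfg x y hv]
  · simp [ind, hv]

/-- Corollary 4.4: for every assignment `{ℓ_v ∈ L, c_v ∈ C}`, the
swap hypothesis-OI error equals the correlation of `(y* − ỹ)` with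
`∂ℓ_v ∘ c_v`; consequently `(∂L ∘ C, α)`-swap multicalibration bounds it by `α`.
Here `ỹ | x ~ Ber(pt x)`, so `E[g(x,ỹ)] = E_x[pt(x)·g(x,1) + (1−pt(x))·g(x,0)]`
and `E[(y* − ỹ)·g(x)] = E[(y* − pt(x))·g(x)]`. -/
theorem swap_hypothesis_OI_eq_and_bound [Fintype X]
    (μ : X → Bool → ℝ) (hμ : IsProb μ)
    (pt : X → ℝ) (hrange : ∀ x, pt x ∈ Set.Icc (0:ℝ) 1)
    (hpos : ∀ x : X, 0 < pmass μ pt (pt x))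
    (C : Finset (X → ℝ)) (hC : C.Nonempty)
    (L : Finset (Bool → ℝ → ℝ)) (hL : L.Nonempty)
    (α : ℝ)
    (ℓa : ℝ → Bool → ℝ → ℝ) (ca : ℝ → X → ℝ)
    (hℓa : ∀ x : X, ℓa (pt x) ∈ L) (hca : ∀ x : X, ca (pt x) ∈ C) :
    (VExp μ pt (fun v => |CExp μ pt v (fun x y =>
        ℓa v y (ca v x) -
          (pt x * ℓa v true (ca v x) + (1 - pt x) * ℓa v false (ca v x)))|) =
      VExp μ pt (fun v => |CExp μ pt v (fun x y =>
        (yval y - pt x) * pd (ℓa v) (ca v x))|))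
    ∧ (VExp μ pt (fun v => (L ×ˢ C).sup' (hL.product hC) (fun q =>
          |CExp μ pt v (fun x y => pd q.1 (q.2 x) * (yval y - v))|)) ≤ α →
        VExp μ pt (fun v => |CExp μ pt v (fun x y =>
          ℓa v y (ca v x) -
            (pt x * ℓa v true (ca v x) + (1 - pt x) * ℓa v false (ca v x)))|) ≤ α) := by
  have key : ∀ v x (y : Bool),
      ℓa v y (ca v x) -
        (pt x * ℓa v true (ca v x) + (1 - pt x) * ℓa v false (ca v x)) =
      (yval y - pt x) * pd (ℓa v) (ca v x) := by
    intro v x y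
    cases y <;> simp [yval, pd] <;> ring
  have eq1 : ∀ v, CExp μ pt v (fun x y =>
      ℓa v y (ca v x) -
        (pt x * ℓa v true (ca v x) + (1 - pt x) * ℓa v false (ca v x))) =
      CExp μ pt v (fun x y => (yval y - pt x) * pd (ℓa v) (ca v x)) := by
    intro v
    exact CExp_congr' _ _ _ _ _ (fun x y _ => key v x y)
  constructor
  · unfold VExp Exp
    refine Finset.sum_congr rfl fun x _ => Finset.sum_congr rfl fun y _ => ?_
    dsimp only
    rw [eq1 (pt x)]
  · intro hswap
    refine le_trans ?_ hswap
    refine VExp_mono μ hμ.1 pt _ _ fun x => ?_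
    set v := pt x with hv
    rw [eq1 v]
    have hmem : (ℓa v, ca v) ∈ L ×ˢ C :=
      Finset.mem_product.2 ⟨hℓa x, hca x⟩
    have hle := Finset.le_sup' (f := fun q : (Bool → ℝ → ℝ) × (X → ℝ) =>
      |CExp μ pt v (fun x y => pd q.1 (q.2 x) * (yval y - v))|)
      (b := (ℓa v, ca v)) hmem
    refine le_trans (le_of_eq ?_) hle
    congr 1
    refine CExp_congr' _ _ _ _ _ fun x' y hx' => ?_
    rw [hx', mul_comm]
end
end

section
/- (Corollary 4.5.) Let {ℓ_v}_{v ∈ Im(p̃)} be an assignment of B-nice loss functions, and set k(v) = k_{ℓ_v}(v) ∈ I_{ℓ_v}. If p̃ is α-calibrated, then E_{v~D_p̃}[ |E_{D|_v}[ℓ_v(y*, k(v)) − ℓ_v(ỹ, k(v))]| ] ≤ B·α. -/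
open Finset

noncomputable section

variable {X : Type*}

/-- Corollary 4.5: for an assignment `{ℓ_v}` of `B`-nice losses
with `k(v) = k_{ℓ_v}(v) ∈ I_{ℓ_v}`, if `pt` is `α`-calibrated then the swap
decision-OI error is at most `B·α`.  Here `ỹ | x ~ Ber(pt x)`, so
`E[g(x,ỹ)] = E_x[pt(x)·g(x,1) + (1−pt(x))·g(x,0)]`. -/
theorem calibration_implies_swap_decision_OI [Fintype X]
    (μ : X → Bool → ℝ) (hμ : IsProb μ)
    (pt : X → ℝ) (hrange : ∀ x, pt x ∈ Set.Icc (0:ℝ) 1)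
    (hpos : ∀ x : X, 0 < pmass μ pt (pt x))
    (B : ℝ) (hB : 0 ≤ B)
    (ℓa : ℝ → Bool → ℝ → ℝ) (kk : ℝ → ℝ)
    (hassign : ∀ x : X, ∃ a b : ℝ, a ≤ b ∧
      (∀ p ∈ Set.Icc (0:ℝ) 1, ∀ t : ℝ,
        lext (ℓa (pt x)) p (proj a b t) ≤ lext (ℓa (pt x)) p t) ∧
      (∀ y : Bool, ∀ s ∈ Set.Icc a b, ∀ t ∈ Set.Icc a b,
        |ℓa (pt x) y s - ℓa (pt x) y t| ≤ |s - t|) ∧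
      (∀ t ∈ Set.Icc a b, |pd (ℓa (pt x)) t| ≤ B) ∧
      kk (pt x) ∈ Set.Icc a b ∧
      (∀ t : ℝ, lext (ℓa (pt x)) (pt x) (kk (pt x)) ≤ lext (ℓa (pt x)) (pt x) t))
    (α : ℝ)
    (hcal : VExp μ pt (fun v => |CExp μ pt v (fun _ y => yval y - v)|) ≤ α) :
    VExp μ pt (fun v => |CExp μ pt v (fun x y =>
        ℓa v y (kk v) -
          (pt x * ℓa v true (kk v) + (1 - pt x) * ℓa v false (kk v)))|) ≤ B * α := by
  -- pointwise bound for each x0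
  have key : ∀ x0 : X,
      |CExp μ pt (pt x0) (fun x y =>
        ℓa (pt x0) y (kk (pt x0)) -
          (pt x * ℓa (pt x0) true (kk (pt x0)) + (1 - pt x) * ℓa (pt x0) false (kk (pt x0))))|
      ≤ B * |CExp μ pt (pt x0) (fun _ y => yval y - pt x0)| := by
    intro x0
    obtain ⟨a, b, hab, _, _, hpd, hk, _⟩ := hassign x0
    set v := pt x0 with hv
    set c := pd (ℓa v) (kk v) with hc
    have hterm : ∀ x y,
        ind (pt x = v) * (μ x y *
          (ℓa v y (kk v) - (pt x * ℓa v true (kk v) + (1 - pt x) * ℓa v false (kk v))))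
        = c * (ind (pt x = v) * (μ x y * (yval y - v))) := by
      intro x y
      by_cases h : pt x = v
      · simp only [ind, if_pos h, h, hc, pd]
        cases y <;> simp [yval] <;> ring
      · simp [ind, if_neg h]
    have hCexp :
        CExp μ pt v (fun x y =>
          ℓa v y (kk v) - (pt x * ℓa v true (kk v) + (1 - pt x) * ℓa v false (kk v)))
        = c * CExp μ pt v (fun _ y => yval y - v) := by
      unfold CExp
      rw [← mul_div_assoc]
      congr 1
      rw [Finset.mul_sum]
      refine Finset.sum_congr rfl fun x _ => ?_
      rw [Finset.mul_sum]
      exact Finset.sum_congr rfl fun y _ => hterm x y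
    rw [hCexp, abs_mul]
    have hcb : |c| ≤ B := hpd _ hk
    exact mul_le_mul_of_nonneg_right hcb (abs_nonneg _) |>.trans_eq rfl
  -- now sum up
  have hμ0 := hμ.1
  unfold VExp Exp
  beta_reduce
  have hstep : ∀ x0 : X, ∀ y : Bool,
      μ x0 y * |CExp μ pt (pt x0) (fun x y =>
        ℓa (pt x0) y (kk (pt x0)) -
          (pt x * ℓa (pt x0) true (kk (pt x0)) + (1 - pt x) * ℓa (pt x0) false (kk (pt x0))))|
      ≤ μ x0 y * (B * |CExp μ pt (pt x0) (fun _ y => yval y - pt x0)|) :=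
    fun x0 y => mul_le_mul_of_nonneg_left (key x0) (hμ0 x0 y)
  calc (∑ x, ∑ y, μ x y * |CExp μ pt (pt x) (fun x' y' =>
        ℓa (pt x) y' (kk (pt x)) -
          (pt x' * ℓa (pt x) true (kk (pt x)) + (1 - pt x') * ℓa (pt x) false (kk (pt x))))|)
      ≤ ∑ x, ∑ y, μ x y * (B * |CExp μ pt (pt x) (fun _ y => yval y - pt x)|) := by
        refine Finset.sum_le_sum fun x _ => Finset.sum_le_sum fun y _ => hstep x y
    _ = B * ∑ x, ∑ y, μ x y * |CExp μ pt (pt x) (fun _ y => yval y - pt x)| := by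
        rw [Finset.mul_sum]; refine Finset.sum_congr rfl fun x _ => ?_
        rw [Finset.mul_sum]; refine Finset.sum_congr rfl fun y _ => by ring
    _ ≤ B * α := mul_le_mul_of_nonneg_left hcal hB
end
end
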